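/- arXiv:1408.0546 — 2 statements merged into one kernel-verified Lean document; each statement's English description precedes it below -/
import Mathlib

section
/- In a free product G = A * B with A nontrivial, the free factor A is malnormal: for any g ∈ G \ A, the intersection A ∩ gAg⁻¹ is trivial. -/
open Monoid

/-!
If `1 ≠ a = g a' g⁻¹` with `a, a' ∈ A`, then `a g = g a'`; it suffices to show that such an
equation forces `g ∈ A`. In general, let `a ≠ 1` lie in a factor `G i` of a free product and
`a x = x a'` with `a'` in the same factor, and write `x` as a reduced word. A letter of `x` from
`G i` at its left end can be absorbed into `a`, giving a shorter solution; at its right end it is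
absorbed the same way after passing to `a' x⁻¹ = x⁻¹ a`. Once neither end of `x` lies in `G i`,
the reduced words of `a x` and `x a'` begin in different factors, which is absurd unless `x = 1`.
So `x ∈ G i`; the binary free product `A ∗ B` is the free product of the `Bool`-indexed family
`(A, B)`, lifted to a common universe.
-/

namespace Monoid.CoprodI

variable {ι : Type*} {G : ι → Type*} [∀ i, Group (G i)]

theorem NeWord.length_toList_inv {i j : ι} (w : NeWord G i j) :
    w.inv.toList.length = w.toList.length := by
  induction w with
  | singleton => rfl
  | append w₁ _ w₂ ih₁ ih₂ => simp [NeWord.inv, ih₁, ih₂, Nat.add_comm]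

theorem NeWord.fstIdx_toWord {i j : ι} (w : NeWord G i j) : w.toWord.fstIdx = some i := by
  simp [Word.fstIdx, NeWord.toWord]

variable [DecidableEq ι] [∀ i, DecidableEq (G i)]

def wordLength (x : CoprodI G) : ℕ :=
  (Word.equiv x).toList.length

theorem Word.equiv_prod (w : Word G) : Word.equiv w.prod = w :=
  Word.equiv.apply_symm_apply w

theorem Word.prod_equiv (x : CoprodI G) : (Word.equiv x).prod = x :=
  Word.equiv.symm_apply_apply x

theorem Word.prod_injective : Function.Injective (Word.prod : Word G → CoprodI G) :=
  Word.equiv.symm.injective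

theorem NeWord.equiv_prod {i j : ι} (w : NeWord G i j) : Word.equiv w.prod = w.toWord :=
  Word.equiv_prod w.toWord

theorem exists_neWord_prod_eq {x : CoprodI G} (hx : x ≠ 1) :
    ∃ i j, ∃ w : NeWord G i j, w.prod = x := by
  obtain ⟨i, j, w, hw⟩ := NeWord.of_word (Word.equiv x) fun h ↦
    hx (by rw [← Word.prod_equiv x, h, Word.prod_empty])
  exact ⟨i, j, w, by rw [NeWord.prod, hw, Word.prod_equiv]⟩

theorem wordLength_inv (x : CoprodI G) : wordLength x⁻¹ = wordLength x := by
  rcases eq_or_ne x 1 with rfl | hx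
  · rw [inv_one]
  obtain ⟨i, j, w, rfl⟩ := exists_neWord_prod_eq hx
  rw [wordLength, wordLength, ← NeWord.inv_prod, NeWord.equiv_prod, NeWord.equiv_prod]
  exact w.length_toList_inv

theorem exists_eq_of_mul_of_fstIdx_eq {i : ι} {x : CoprodI G}
    (hx : (Word.equiv x).fstIdx = some i) :
    ∃ (m : G i) (y : CoprodI G), x = of m * y ∧ wordLength y < wordLength x := by
  set p := Word.equivPair i (Word.equiv x)
  have hp : Word.rcons p = Word.equiv x := (Word.equivPair i).symm_apply_apply _
  have hm : p.head ≠ 1 := by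
    intro h1
    apply p.fstIdx_ne
    rw [← hx, ← hp, Word.rcons, dif_pos h1]
  refine ⟨p.head, p.tail.prod, ?_, ?_⟩
  · rw [← Word.prod_rcons, hp, Word.prod_equiv]
  · rw [wordLength, wordLength, Word.equiv_prod, ← hp, Word.rcons, dif_neg hm]
    exact Nat.lt_succ_self _

theorem NeWord.of_mul_prod_ne_prod_mul_of {i j k : ι} (w : NeWord G j k) (hj : j ≠ i)
    (hk : k ≠ i) {a a' : G i} (ha : a ≠ 1) (ha' : a' ≠ 1) :
    of a * w.prod ≠ w.prod * of a' := by
  intro h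
  have hw : (append (singleton a ha) hj.symm w).toWord
      = (append w hk (singleton a' ha')).toWord :=
    Word.prod_injective (by
      change NeWord.prod _ = NeWord.prod _
      rwa [append_prod, append_prod, prod_singleton, prod_singleton])
  have := congrArg Word.fstIdx hw
  rw [fstIdx_toWord, fstIdx_toWord, Option.some_inj] at this
  exact hj this.symm

theorem mem_range_of_of_mul_eq_mul_of {i : ι} {a a' : G i} (ha : a ≠ 1) {x : CoprodI G}
    (h : of a * x = x * of a') : x ∈ (of : G i →* CoprodI G).range := by
  induction hn : wordLength x using Nat.strong_induction_on generalizing x a a' with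
  | _ n ih =>
  have strip : ∀ {z : CoprodI G} {b b' : G i}, b ≠ 1 → of b * z = z * of b' →
      wordLength z = n → (Word.equiv z).fstIdx = some i → z ∈ (of : G i →* CoprodI G).range := by
    intro z b b' hb hz hzn hfst
    obtain ⟨m, y, rfl, hy⟩ := exists_eq_of_mul_of_fstIdx_eq hfst
    have hy' : of (m⁻¹ * b * m) * y = y * of b' := by
      simp [mul_assoc, hz]
    have hb' : m⁻¹ * b * m ≠ 1 := by simpa [mul_assoc, inv_mul_eq_one] using hb
    obtain ⟨c, hc⟩ := ih _ (hzn ▸ hy) hb' hy' rfl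
    exact ⟨m * c, by rw [map_mul, hc]⟩
  rcases eq_or_ne x 1 with rfl | hx
  · exact one_mem _
  have ha' : a' ≠ 1 := by
    rintro rfl
    rw [map_one, mul_one, mul_eq_right, (of_injective i).eq_iff' (map_one _)] at h
    exact ha h
  obtain ⟨j, k, w, rfl⟩ := exists_neWord_prod_eq hx
  by_cases hj : j = i
  · subst hj
    exact strip ha h hn (by rw [NeWord.equiv_prod, NeWord.fstIdx_toWord])
  by_cases hk : k = i
  · subst hk
    rw [← inv_mem_iff]
    refine strip (b' := a) ha' ?_ (by rw [wordLength_inv, hn]) ?_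
    · exact (SemiconjBy.inv_symm_left h.symm).symm
    · rw [← NeWord.inv_prod, NeWord.equiv_prod, NeWord.fstIdx_toWord]
  exact absurd h (w.of_mul_prod_ne_prod_mul_of hj hk ha ha')

end Monoid.CoprodI

namespace Monoid.Coprod

universe u v

variable (A : Type u) (B : Type v) [Group A] [Group B]

def factor : Bool → Type max u v
  | true => ULift.{v} A
  | false => ULift.{u} B

instance : ∀ b, Group (factor A B b)
  | true => inferInstanceAs (Group (ULift A))
  | false => inferInstanceAs (Group (ULift B))

def toCoprodI : Coprod A B →* CoprodI (factor A B) :=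
  lift ((CoprodI.of (i := true)).comp MulEquiv.ulift.symm.toMonoidHom)
    ((CoprodI.of (i := false)).comp MulEquiv.ulift.symm.toMonoidHom)

def ofCoprodI : CoprodI (factor A B) →* Coprod A B :=
  CoprodI.lift fun
    | true => inl.comp MulEquiv.ulift.toMonoidHom
    | false => inr.comp MulEquiv.ulift.toMonoidHom

variable {A B}

theorem toCoprodI_inl (a : A) :
    toCoprodI A B (inl a) = CoprodI.of (i := true) (ULift.up a) :=
  lift_apply_inl _ _ a

theorem ofCoprodI_of_true (a : factor A B true) :
    ofCoprodI A B (CoprodI.of a) = inl (ULift.down (α := A) a) :=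
  CoprodI.lift_of _ a

theorem ofCoprodI_comp_toCoprodI : (ofCoprodI A B).comp (toCoprodI A B) = .id _ := by
  ext <;> simp only [toCoprodI, ofCoprodI, MonoidHom.comp_apply, lift_apply_inl, lift_apply_inr,
    CoprodI.lift_of] <;> rfl

theorem mem_range_inl_of_inl_mul_eq_mul_inl {a a' : A} (ha : a ≠ 1) {g : Coprod A B}
    (h : inl a * g = g * inl a') : g ∈ (inl : A →* Coprod A B).range := by
  classical
  have h' := congrArg (toCoprodI A B) h
  rw [map_mul, map_mul, toCoprodI_inl, toCoprodI_inl] at h'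
  obtain ⟨u, hu⟩ := CoprodI.mem_range_of_of_mul_eq_mul_of (i := true)
    (mt (congrArg ULift.down) ha) h'
  exact ⟨u.down, by
    rw [← ofCoprodI_of_true, hu, ← MonoidHom.comp_apply, ofCoprodI_comp_toCoprodI,
      MonoidHom.id_apply]⟩

end Monoid.Coprod

theorem freeFactor_malnormal_general (A B : Type*) [Group A] [Group B]
    (g : Coprod A B) (hg : g ∉ (Coprod.inl : A →* Coprod A B).range) :
    (Coprod.inl : A →* Coprod A B).range ⊓
        ((Coprod.inl : A →* Coprod A B).range.map (MulAut.conj g).toMonoidHom) = ⊥ := by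
  rw [eq_bot_iff]
  rintro _ ⟨⟨a, rfl⟩, _, ⟨a', rfl⟩, hconj⟩
  rw [Subgroup.mem_bot]
  by_contra ha
  refine hg (Coprod.mem_range_inl_of_inl_mul_eq_mul_inl (a := a) (a' := a')
    (fun h ↦ ha (by rw [h, map_one])) ?_)
  rw [← hconj]
  simp [MulAut.conj_apply]

/-- In a free product `G = A ∗ B` with `A` nontrivial, the free factor `A` is malnormal:
for every `g ∉ A`, the intersection `A ⊓ gAg⁻¹` is trivial. -/
theorem freeFactor_malnormal (A B : Type*) [Group A] [Group B] [Nontrivial A]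
    (g : Coprod A B) (hg : g ∉ (Coprod.inl : A →* Coprod A B).range) :
    (Coprod.inl : A →* Coprod A B).range ⊓
        ((Coprod.inl : A →* Coprod A B).range.map (MulAut.conj g).toMonoidHom) = ⊥ :=
  freeFactor_malnormal_general A B g hg
end

section
/- Let G = A * B be a free product and g ∈ G \ A. Then the subgroup of G generated by A and gAg⁻¹ is isomorphic to the free product A * (gAg⁻¹); in particular, if h₁,...,hₛ ∈ A are nontrivial elements and s ≥ 1, then any alternating product h₁ (g h₂ g⁻¹) h₃ (g h₄ g⁻¹) ⋯ with all factors nontrivial is a nontrivial element of G. -/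
open Monoid

/-!
Write `g = a w c` with `a, c ∈ A` and `w` a nonempty reduced word whose first and last letters
lie outside `A`. After conjugating by `a`, the map `A ∗ A → A ∗ B` sends the letters `x` of the
first factor to `a⁻¹ x a ∈ A` and the letters `y` of the second factor to `w (c y c⁻¹) w⁻¹`,
a reduced word beginning and ending outside `A`. Hence the letters of a reduced word of `A ∗ A`
go to reduced words that concatenate without cancellation, and the map is injective; its image
is generated by `A` and `gAg⁻¹`.
-/

universe u v

open scoped Monoid.Coprod

namespace Monoid.CoprodI

section Monoid

variable {ι : Type*} {M : ι → Type*} [∀ i, Monoid (M i)]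

theorem Word.eq_empty_of_prod_eq_one {w : Word M} (h : w.prod = 1) : w = .empty := by
  classical
  exact Word.equiv.symm.injective (h.trans Word.prod_empty.symm)

theorem NeWord.prod_ne_one {i j : ι} (w : NeWord M i j) : w.prod ≠ 1 := fun h =>
  w.toList_ne_nil (congrArg Word.toList (Word.eq_empty_of_prod_eq_one h))

theorem NeWord.exists_prod_eq {x : CoprodI M} (hx : x ≠ 1) :
    ∃ (i j : ι) (w : NeWord M i j), w.prod = x := by
  classical
  have hprod : (Word.equiv x).prod = x := Word.equiv.symm_apply_apply x
  obtain ⟨i, j, w, hw⟩ :=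
    NeWord.of_word (Word.equiv x) fun h => hx (by rw [← hprod, h, Word.prod_empty])
  exact ⟨i, j, w, by rw [NeWord.prod, hw, hprod]⟩

theorem prod_ofFn_of_ne_one {n : ℕ} (hn : n ≠ 0) {c : Fin n → ι} (x : ∀ k, M (c k))
    (hx : ∀ k, x k ≠ 1) (hc : (List.ofFn c).IsChain (· ≠ ·)) :
    (List.ofFn fun k => of (x k)).prod ≠ 1 := by
  let w : Word M :=
    { toList := List.ofFn fun k => ⟨c k, x k⟩
      ne_one := by simpa [List.mem_ofFn] using hx
      chain_ne := List.isChain_ofFn.2 (List.isChain_ofFn.1 hc) }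
  have hw : w ≠ .empty := fun h => by
    simpa [w, Word.empty, hn] using congrArg Word.toList h
  have hprod : w.prod = (List.ofFn fun k => of (x k)).prod := by
    simp [w, Word.prod, List.map_ofFn, Function.comp_def]
  rw [← hprod]
  exact fun h => hw (Word.eq_empty_of_prod_eq_one h)

end Monoid

section Group

variable {ι : Type*} {G : ι → Type*} [∀ i, Group (G i)]

theorem NeWord.exists_prod_eq_of_mul_or_mem_range {i k : ι} (w : NeWord G i k) :
    (i = k ∧ w.prod ∈ (of : G i →* CoprodI G).range) ∨
      ∃ j, j ≠ i ∧ ∃ (a : G i) (w' : NeWord G j k), w.prod = of a * w'.prod := by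
  induction w with
  | singleton x _ => exact .inl ⟨rfl, x, (NeWord.prod_singleton _ _).symm⟩
  | @append i l m k w₁ hlm w₂ ih₁ _ =>
    rw [NeWord.append_prod]
    rcases ih₁ with ⟨rfl, a, ha⟩ | ⟨j, hj, a, w', hw'⟩
    · exact .inr ⟨m, hlm.symm, a, w₂, by rw [ha]⟩
    · exact .inr ⟨j, hj, a, w'.append hlm w₂, by rw [hw', NeWord.append_prod, mul_assoc]⟩

theorem NeWord.exists_prod_eq_of_mul {i j k : ι} (w : NeWord G j k)
    (hw : w.prod ∉ (of : G i →* CoprodI G).range) :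
    ∃ (a : G i) (j' : ι) (w' : NeWord G j' k), j' ≠ i ∧ w.prod = of a * w'.prod := by
  by_cases hj : j = i
  · subst hj
    rcases w.exists_prod_eq_of_mul_or_mem_range with ⟨-, hmem⟩ | ⟨j', hj', a, w', hw'⟩
    · exact absurd hmem hw
    · exact ⟨a, j', w', hj', hw'⟩
  · exact ⟨1, j, w, hj, by rw [map_one, one_mul]⟩

theorem NeWord.exists_prod_eq_mul_of {i j k : ι} (w : NeWord G j k)
    (hw : w.prod ∉ (of : G i →* CoprodI G).range) :
    ∃ (c : G i) (k' : ι) (w' : NeWord G j k'), k' ≠ i ∧ w.prod = w'.prod * of c := by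
  have hw_inv : w.inv.prod ∉ (of : G i →* CoprodI G).range := by
    rwa [NeWord.inv_prod, inv_mem_iff]
  obtain ⟨c, k', w', hk', hw'⟩ := w.inv.exists_prod_eq_of_mul hw_inv
  refine ⟨c⁻¹, k', w'.inv, hk', ?_⟩
  rw [NeWord.inv_prod, map_inv, ← mul_inv_rev, ← hw', NeWord.inv_prod, inv_inv]

theorem exists_eq_of_mul_neWord_prod_mul_of {i : ι} {g : CoprodI G}
    (hg : g ∉ (of : G i →* CoprodI G).range) :
    ∃ (a c : G i) (j k : ι) (w : NeWord G j k), j ≠ i ∧ k ≠ i ∧ g = of a * w.prod * of c := by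
  obtain ⟨j₀, k₀, w₀, rfl⟩ := NeWord.exists_prod_eq fun h : g = 1 => hg (h ▸ one_mem _)
  obtain ⟨a, j, w₁, hj, hw₁⟩ := w₀.exists_prod_eq_of_mul hg
  have hw₁_mem : w₁.prod ∉ (of : G i →* CoprodI G).range := fun hmem =>
    hg (hw₁ ▸ mul_mem ⟨a, rfl⟩ hmem)
  obtain ⟨c, k, w, hk, hw⟩ := w₁.exists_prod_eq_mul_of hw₁_mem
  exact ⟨a, c, j, k, w, hj, hk, by rw [hw₁, hw, mul_assoc]⟩

variable {K : Bool → Type*} [∀ b, Group (K b)]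

/- A letter `y` of `K false` goes to the reduced word `v (β y) v⁻¹`, which begins and ends
in `j`. -/
theorem exists_neWord_prod_eq_map_neWord_prod {i j k : ι} (hj : j ≠ i) (hk : k ≠ i)
    (v : NeWord G j k) {α : K true →* G i} {β : K false →* G i} (hα : Function.Injective α)
    (hβ : Function.Injective β) {ψ : CoprodI K →* CoprodI G}
    (hψα : ∀ x, ψ (of x) = of (α x)) (hψβ : ∀ y, ψ (of y) = v.prod * of (β y) * v.prod⁻¹)
    {p q : Bool} (u : NeWord K p q) :
    ∃ u' : NeWord G (bif p then i else j) (bif q then i else j), u'.prod = ψ u.prod := by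
  induction u with
  | @singleton p x hx =>
    cases p
    · refine ⟨v.append hk ((NeWord.singleton (β x) ((map_ne_one_iff β hβ).2 hx)).append
        hk.symm v.inv), ?_⟩
      simp only [NeWord.append_prod, NeWord.prod_singleton, NeWord.inv_prod, hψβ, mul_assoc]
    · exact ⟨.singleton (α x) ((map_ne_one_iff α hα).2 hx), by
        rw [NeWord.prod_singleton, NeWord.prod_singleton, hψα]⟩
  | @append p q r s u₁ hqr u₂ ih₁ ih₂ =>
    obtain ⟨u₁', hu₁'⟩ := ih₁
    obtain ⟨u₂', hu₂'⟩ := ih₂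
    have hne : (bif q then i else j) ≠ (bif r then i else j) := by
      cases q <;> cases r <;> simp_all [eq_comm]
    exact ⟨u₁'.append hne u₂', by
      rw [NeWord.append_prod, NeWord.append_prod, map_mul, hu₁', hu₂']⟩

theorem injective_of_map_of_eq_conj_neWord_prod {i j k : ι} (hj : j ≠ i) (hk : k ≠ i)
    (v : NeWord G j k) {α : K true →* G i} {β : K false →* G i} (hα : Function.Injective α)
    (hβ : Function.Injective β) {ψ : CoprodI K →* CoprodI G}
    (hψα : ∀ x, ψ (of x) = of (α x)) (hψβ : ∀ y, ψ (of y) = v.prod * of (β y) * v.prod⁻¹) :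
    Function.Injective ψ := by
  refine (injective_iff_map_eq_one ψ).2 fun x hx => ?_
  by_contra hx₁
  obtain ⟨p, q, u, rfl⟩ := NeWord.exists_prod_eq hx₁
  obtain ⟨u', hu'⟩ := exists_neWord_prod_eq_map_neWord_prod hj hk v hα hβ hψα hψβ u
  exact u'.prod_ne_one (hu'.trans hx)

theorem injective_of_map_of_eq_conj {i : ι} {g : CoprodI G}
    (hg : g ∉ (of : G i →* CoprodI G).range) {α : K true →* G i} {β : K false →* G i}
    (hα : Function.Injective α) (hβ : Function.Injective β) {ψ : CoprodI K →* CoprodI G}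
    (hψα : ∀ x, ψ (of x) = of (α x)) (hψβ : ∀ y, ψ (of y) = g * of (β y) * g⁻¹) :
    Function.Injective ψ := by
  obtain ⟨a, c, j, k, v, hj, hk, rfl⟩ := exists_eq_of_mul_neWord_prod_mul_of hg
  have hψ' : Function.Injective ((MulAut.conj (of a)⁻¹).toMonoidHom.comp ψ) := by
    refine injective_of_map_of_eq_conj_neWord_prod hj hk v
      (α := (MulAut.conj a⁻¹).toMonoidHom.comp α) (β := (MulAut.conj c).toMonoidHom.comp β)
      ((MulAut.conj a⁻¹).injective.comp hα) ((MulAut.conj c).injective.comp hβ)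
      (fun x => ?_) (fun y => ?_)
    · simp [hψα]
    · simp [hψβ, mul_assoc]
  rw [MonoidHom.coe_comp] at hψ'
  exact hψ'.of_comp

end Group

end Monoid.CoprodI

instance instGroupCond {M N : Type u} [Group M] [Group N] : ∀ b, Group (cond b M N)
  | true => ‹_›
  | false => ‹_›

namespace Monoid.Coprod

def mulEquivCoprodI (K : Bool → Type*) [∀ b, Monoid (K b)] : K true ∗ K false ≃* CoprodI K :=
  MonoidHom.toMulEquiv (lift CoprodI.of CoprodI.of)
    (CoprodI.lift fun | true => inl | false => inr)
    (by ext <;> simp)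
    (by ext b x; cases b <;> simp)

section MulEquivCoprodI

variable {K : Bool → Type*} [∀ b, Monoid (K b)]

@[simp]
theorem mulEquivCoprodI_inl (x : K true) : mulEquivCoprodI K (inl x) = CoprodI.of x := by
  simp [mulEquivCoprodI]

@[simp]
theorem mulEquivCoprodI_inr (x : K false) : mulEquivCoprodI K (inr x) = CoprodI.of x := by
  simp [mulEquivCoprodI]

@[simp]
theorem mulEquivCoprodI_symm_of_true (x : K true) :
    (mulEquivCoprodI K).symm (CoprodI.of x) = inl x :=
  (MulEquiv.symm_apply_eq _).2 (mulEquivCoprodI_inl x).symm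

@[simp]
theorem mulEquivCoprodI_symm_of_false (x : K false) :
    (mulEquivCoprodI K).symm (CoprodI.of x) = inr x :=
  (MulEquiv.symm_apply_eq _).2 (mulEquivCoprodI_inr x).symm

end MulEquivCoprodI

theorem lift_inl_conj_inl_injective {A : Type u} {B : Type v} [Group A] [Group B] {g : A ∗ B}
    (hg : g ∉ (inl : A →* A ∗ B).range) :
    Function.Injective (lift inl ((MulAut.conj g).toMonoidHom.comp inl) : A ∗ A →* A ∗ B) := by
  set φ : A ∗ A →* A ∗ B := lift inl ((MulAut.conj g).toMonoidHom.comp inl)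
  let eA := mulEquivCoprodI fun _ : Bool => A
  -- `CoprodI` needs a family of types in a single universe.
  let eG := (MulEquiv.coprodCongr MulEquiv.ulift.symm MulEquiv.ulift.symm).trans
    (mulEquivCoprodI fun b => cond b (ULift.{v} A) (ULift.{u} B))
  have heG_inl (x : A) : eG (inl x) = CoprodI.of (i := true) (MulEquiv.ulift.symm x) := by
    simp [eG]
  have hg' : eG g ∉ (CoprodI.of (i := true)).range := by
    rintro ⟨x, hx⟩
    exact hg ⟨x.down, eG.injective ((heG_inl _).trans hx)⟩
  have hψ : Function.Injective (eG.toMonoidHom.comp (φ.comp eA.symm.toMonoidHom)) :=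
    CoprodI.injective_of_map_of_eq_conj hg'
      (α := (MulEquiv.ulift.symm : A ≃* ULift.{v} A).toMonoidHom)
      (β := (MulEquiv.ulift.symm : A ≃* ULift.{v} A).toMonoidHom) MulEquiv.ulift.symm.injective
      MulEquiv.ulift.symm.injective (fun x => by simp [φ, eA, heG_inl])
      (fun y => by simp [φ, eA, heG_inl])
  exact fun x y hxy => eA.injective (hψ (by simp [hxy]))

theorem prod_ofFn_alternating_ne_one {M : Type*} [Group M] {n : ℕ} (hn : n ≠ 0) {h : Fin n → M}
    (hh : ∀ k, h k ≠ 1) :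
    (List.ofFn fun k : Fin n => if (k : ℕ) % 2 = 1 then inr (h k) else inl (h k)).prod ≠
      (1 : M ∗ M) := by
  let eA := mulEquivCoprodI fun _ : Bool => M
  have heA : (eA ∘ fun k : Fin n => if (k : ℕ) % 2 = 1 then inr (h k) else inl (h k)) =
      fun k : Fin n =>
        CoprodI.of (M := fun _ : Bool => M) (i := decide ((k : ℕ) % 2 = 0)) (h k) := by
    funext k
    rw [Function.comp_apply]
    split_ifs with hk <;> simp_all [eA]
  have hchain : (List.ofFn fun k : Fin n => decide ((k : ℕ) % 2 = 0)).IsChain (· ≠ ·) :=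
    List.isChain_ofFn.2 fun k _ => by
      rcases Nat.mod_two_eq_zero_or_one k with hk | hk <;> simp [hk, Nat.add_mod]
  intro h1
  apply CoprodI.prod_ofFn_of_ne_one (M := fun _ : Bool => M) hn h hh hchain
  rw [← heA, ← List.map_ofFn, ← map_list_prod, h1, map_one]

end Monoid.Coprod

/-- Let `G = A ∗ B` be a free product and `g ∈ G \ A`. Then the subgroup generated by `A`
and `gAg⁻¹` is isomorphic to the free product `A ∗ A` (the first factor corresponding to
`A` and the second to `gAg⁻¹`); in particular any alternating product
`h₁ (g h₂ g⁻¹) h₃ (g h₄ g⁻¹) ⋯` of nontrivial elements of `A` and of `gAg⁻¹` is a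
nontrivial element of `G`. -/
theorem subgroup_generated_by_factor_and_conjugate (A B : Type*) [Group A] [Group B]
    (g : Coprod A B) (hg : g ∉ (Coprod.inl : A →* Coprod A B).range) :
    Nonempty
      ((((Coprod.inl : A →* Coprod A B).range ⊔
          (Coprod.inl : A →* Coprod A B).range.map (MulAut.conj g).toMonoidHom :
            Subgroup (Coprod A B))) ≃* Coprod A A) ∧
    ∀ (s : ℕ), 1 ≤ s → ∀ h : Fin s → A, (∀ i, h i ≠ 1) →
      (List.ofFn (fun i : Fin s =>
        if (i : ℕ) % 2 = 1 then g * Coprod.inl (h i) * g⁻¹ else Coprod.inl (h i))).prod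
        ≠ 1 := by
  set φ : A ∗ A →* A ∗ B := Coprod.lift Coprod.inl ((MulAut.conj g).toMonoidHom.comp Coprod.inl)
  have hφ : Function.Injective φ := Coprod.lift_inl_conj_inl_injective hg
  refine ⟨⟨(MulEquiv.subgroupCongr ?_).trans (MonoidHom.ofInjective hφ).symm⟩,
    fun s hs h hh => ?_⟩
  · rw [Coprod.range_lift, MonoidHom.range_comp]
  · have hlist : (List.ofFn fun i : Fin s =>
        if (i : ℕ) % 2 = 1 then g * Coprod.inl (h i) * g⁻¹ else Coprod.inl (h i)) =
        (List.ofFn fun i : Fin s =>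
          if (i : ℕ) % 2 = 1 then Coprod.inr (h i) else Coprod.inl (h i)).map φ := by
      rw [List.map_ofFn]
      congr 1
      funext i
      by_cases hi : (i : ℕ) % 2 = 1 <;> simp [φ, hi]
    rw [hlist, ← map_list_prod]
    exact (map_ne_one_iff φ hφ).2 (Coprod.prod_ofFn_alternating_ne_one (by omega) hh)
end
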